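/- For every k > 0 and u ∈ H¹(ℝ) with u ≠ 0, the quotient ⟨u, H_k u⟩ / ⟨u, G_k * u⟩ ≥ k⁴, where G_k(x) = e^{-k|x|}/(2k) is the Green's function of D_k = -∂ₓ² + k² and H_k = -∂ₓ² + k² + 1 + V with V(x) = -(3/2) sech(x/2)². -/

import Mathlib

open MeasureTheory Real Set
open scoped Convolution

lemma integral_deriv_zero (f f' : ℝ → ℝ) (hf : ∀ x, HasDerivAt f (f' x) x)
    (hc : Continuous f') (hs : HasCompactSupport f) : ∫ x, f' x = 0 := by
  have hderiv : deriv f = f' := funext fun x => (hf x).deriv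
  have hs' : HasCompactSupport f' := hderiv ▸ hs.deriv
  obtain ⟨R₀, hR₀⟩ := ((hs.union hs').isBounded).subset_closedBall 0
  set R := |R₀| with hRdef
  have hR : tsupport f ∪ tsupport f' ⊆ Metric.closedBall 0 R :=
    hR₀.trans (Metric.closedBall_subset_closedBall (le_abs_self _))
  have hRpos : 0 ≤ R := abs_nonneg _
  have hsub : Function.support f' ⊆ Set.Ioc (-(R+1)) (R+1) := by
    intro x hx
    have hxK : x ∈ Metric.closedBall 0 R := hR (Set.mem_union_right _ (subset_tsupport _ hx))
    simp only [Metric.mem_closedBall, Real.dist_eq, sub_zero] at hxK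
    cases' abs_le.mp hxK with h1 h2
    exact ⟨by linarith, by linarith⟩
  have h0 : ∀ x, R < |x| → f x = 0 := by
    intro x hx
    apply image_eq_zero_of_notMem_tsupport
    intro hmem
    have := hR (Set.mem_union_left _ hmem)
    simp only [Metric.mem_closedBall, Real.dist_eq, sub_zero] at this
    linarith
  rw [← intervalIntegral.integral_eq_integral_of_support_subset hsub,
    intervalIntegral.integral_eq_sub_of_hasDerivAt (fun x _ => hf x)
      (hc.intervalIntegrable _ _),
    h0 (R+1) (by rw [abs_of_nonneg (by linarith)]; linarith),
    h0 (-(R+1)) (by rw [abs_neg, abs_of_nonneg (by linarith)]; linarith)]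
  ring

lemma hg_deriv (x : ℝ) : HasDerivAt (fun x : ℝ => Real.sinh (x/2) / Real.cosh (x/2))
    ((1/2) / (Real.cosh (x/2))^2) x := by
  have h1 : HasDerivAt (fun x : ℝ => x/2) (1/2) x := (hasDerivAt_id x).div_const 2
  have hs : HasDerivAt (fun x : ℝ => Real.sinh (x/2)) (Real.cosh (x/2) * (1/2)) x :=
    (Real.hasDerivAt_sinh _).comp x h1
  have hc : HasDerivAt (fun x : ℝ => Real.cosh (x/2)) (Real.sinh (x/2) * (1/2)) x :=
    (Real.hasDerivAt_cosh _).comp x h1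
  have hcpos := Real.cosh_pos (x/2)
  have := hs.div hc hcpos.ne'
  have hid := Real.cosh_sq_sub_sinh_sq (x/2)
  have e : (1/2) / (Real.cosh (x/2))^2 = (Real.cosh (x/2) * (1/2) * Real.cosh (x/2)
      - Real.sinh (x/2) * (Real.sinh (x/2) * (1/2))) / (Real.cosh (x/2))^2 := by
    congr 1
    linear_combination (-1/2) * hid
  rw [e]
  exact this

lemma ground_state (u : ℝ → ℝ) (hu : ContDiff ℝ (⊤ : ℕ∞) u) (hsupp : HasCompactSupport u) :
    0 ≤ ∫ x, ((deriv u x)^2 + (1 + (-(3/2)/(Real.cosh (x/2))^2)) * u x ^2) := by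
  have hdu : ∀ x, HasDerivAt u (deriv u x) x :=
    fun x => (hu.differentiable (by simp) x).hasDerivAt
  have hcu : Continuous u := hu.continuous
  have hcu' : Continuous (deriv u) := hu.continuous_deriv (by simp)
  set g : ℝ → ℝ := fun x => Real.sinh (x/2) / Real.cosh (x/2) with hgdef
  have hgc : Continuous g := by
    apply Continuous.div
    · exact Real.continuous_sinh.comp (continuous_id.div_const 2)
    · exact Real.continuous_cosh.comp (continuous_id.div_const 2)
    · exact fun x => (Real.cosh_pos _).ne'
  set φ' : ℝ → ℝ := fun x =>
    (1/2)/(Real.cosh (x/2))^2 * u x^2 + g x * (2 * u x * deriv u x) with hφ'def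
  have hφ : ∀ x, HasDerivAt (fun x => g x * u x ^ 2) (φ' x) x := by
    intro x
    have hsq : HasDerivAt (fun x => u x ^ 2) (2 * u x * deriv u x) x := by
      have := (hdu x).pow 2
      simp at this
      exact this
    exact (hg_deriv x).mul hsq
  have hφ'c : Continuous φ' := by
    apply Continuous.add
    · apply Continuous.mul
      · apply Continuous.div continuous_const
        · exact (Real.continuous_cosh.comp (continuous_id.div_const 2)).pow 2
        · exact fun x => pow_ne_zero _ (Real.cosh_pos _).ne'
      · exact hcu.pow 2
    · exact hgc.mul ((continuous_const.mul hcu).mul hcu')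
  have hsq_supp : HasCompactSupport (fun x => u x ^ 2) :=
    hsupp.comp_left (g := (· ^ 2)) (by simp)
  have hφsupp : HasCompactSupport (fun x => g x * u x ^ 2) := hsq_supp.mul_left
  have hint : ∫ x, φ' x = 0 := integral_deriv_zero _ _ hφ hφ'c hφsupp
  have hpt : ∀ x, (deriv u x)^2 + (1 + (-(3/2)/(Real.cosh (x/2))^2)) * u x ^2
      = (deriv u x + g x * u x)^2 - φ' x := by
    intro x
    have hcpos := Real.cosh_pos (x/2)
    have hid := Real.cosh_sq_sub_sinh_sq (x/2)
    simp only [hφ'def, hgdef]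
    field_simp
    linear_combination (2 * u x ^ 2) * hid
  have hI1 : Integrable (fun x => (deriv u x + g x * u x)^2) := by
    apply Continuous.integrable_of_hasCompactSupport
    · exact ((hcu'.add (hgc.mul hcu)).pow 2)
    · exact ((hsupp.deriv.add hsupp.mul_left).comp_left (g := (· ^ 2)) (by simp))
  have hI2 : Integrable φ' := hφ'c.integrable_of_hasCompactSupport
    (by
      have : HasCompactSupport (deriv (fun x => g x * u x ^ 2)) := hφsupp.deriv
      have hd : deriv (fun x => g x * u x ^ 2) = φ' := funext fun x => (hφ x).deriv
      rwa [hd] at this)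
  calc (0:ℝ) ≤ ∫ x, (deriv u x + g x * u x)^2 := integral_nonneg fun x => sq_nonneg _
    _ = ∫ x, ((deriv u x + g x * u x)^2 - φ' x) := by
        rw [integral_sub hI1 hI2, hint, sub_zero]
    _ = _ := by
        congr 1; funext x; rw [hpt x]

lemma exp_abs_integrable {k : ℝ} (hk : 0 < k) :
    Integrable (fun z : ℝ => Real.exp (-(k * |z|))) := by
  have hIoi : IntegrableOn (fun z : ℝ => Real.exp (-(k * z))) (Ioi 0) := by
    simpa [neg_mul] using exp_neg_integrableOn_Ioi 0 hk
  have hg : Integrable ((Ioi (0:ℝ)).indicator fun z => Real.exp (-(k * z))) :=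
    hIoi.integrable_indicator measurableSet_Ioi
  have hg2 : Integrable (fun z : ℝ => ((Ioi (0:ℝ)).indicator fun z => Real.exp (-(k * z))) (-z)) :=
    hg.comp_neg
  apply (hg.add hg2).congr
  filter_upwards [compl_mem_ae_iff.mpr (volume_singleton (a := (0:ℝ)))] with z hz
  rcases lt_trichotomy z 0 with h | h | h
  · simp [indicator_of_notMem, h.not_gt, indicator_of_mem, (neg_pos.mpr h), abs_of_neg h,
      mem_Ioi, mul_neg]
  · exact (hz (by simp [h])).elim
  · simp [indicator_of_mem, mem_Ioi, h, abs_of_pos h, indicator_of_notMem, (by linarith : ¬ -z > 0)]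

lemma exp_abs_integral {k : ℝ} (hk : 0 < k) :
    ∫ z : ℝ, Real.exp (-(k * |z|)) = 2 / k := by
  have hIoi : ∫ z in Ioi (0:ℝ), Real.exp (-(k * z)) = 1 / k := by
    have := integral_comp_mul_left_Ioi (fun x => Real.exp (-x)) 0 hk
    simp only [mul_zero, smul_eq_mul] at this
    rw [show (fun z => Real.exp (-(k * z))) = (fun z => Real.exp (-(k * z))) from rfl]
    calc ∫ z in Ioi (0:ℝ), Real.exp (-(k * z)) = k⁻¹ * ∫ x in Ioi (0:ℝ), Real.exp (-x) := this
      _ = 1 / k := by rw [integral_exp_neg_Ioi]; simp [one_div]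
  have hIic : ∫ z in Iic (0:ℝ), Real.exp (-(k * |z|)) = 1 / k := by
    have h1 : ∫ z in Iic (0:ℝ), Real.exp (-(k * |z|)) = ∫ z in Iic (0:ℝ), Real.exp (-(k * (-z))) := by
      apply setIntegral_congr_fun measurableSet_Iic
      intro z hz
      simp only [mem_Iic] at hz
      show Real.exp (-(k * |z|)) = Real.exp (-(k * -z))
      rw [abs_of_nonpos hz]
    rw [h1]
    have := integral_comp_neg_Iic (0:ℝ) (fun z => Real.exp (-(k * z)))
    simp only [neg_zero] at this
    rw [show (fun z : ℝ => Real.exp (-(k * -z))) = (fun z : ℝ => Real.exp (-(k * z))) ∘ Neg.neg from rfl] at *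
    calc ∫ z in Iic (0:ℝ), Real.exp (-(k * -z)) = ∫ z in Ioi (0:ℝ), Real.exp (-(k * z)) := this
      _ = 1 / k := hIoi
  have hsplit := intervalIntegral.integral_Iic_add_Ioi (b := (0:ℝ))
    ((exp_abs_integrable hk).integrableOn) ((exp_abs_integrable hk).integrableOn)
  rw [← hsplit, hIic]
  have : ∫ z in Ioi (0:ℝ), Real.exp (-(k * |z|)) = 1 / k := by
    rw [setIntegral_congr_fun measurableSet_Ioi (fun z hz => by
      show Real.exp (-(k * |z|)) = Real.exp (-(k * z))
      rw [abs_of_pos (mem_Ioi.mp hz)])]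
    exact hIoi
  rw [this]; ring

lemma G_int {k : ℝ} (hk : 0 < k) :
    Integrable (fun z : ℝ => Real.exp (-(k * |z|)) / (2 * k)) :=
  (exp_abs_integrable hk).div_const _

lemma G_integral {k : ℝ} (hk : 0 < k) :
    ∫ z : ℝ, Real.exp (-(k * |z|)) / (2 * k) = (k^2)⁻¹ := by
  rw [integral_div, exp_abs_integral hk]
  field_simp

lemma G_cont {k : ℝ} : Continuous (fun z : ℝ => Real.exp (-(k * |z|)) / (2 * k)) := by
  apply Continuous.div_const
  exact Real.continuous_exp.comp ((continuous_const.mul continuous_abs).neg)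

-- rewrite the inner integral as a convolution
lemma inner_eq_conv {k : ℝ} (u : ℝ → ℝ) (x : ℝ) :
    (∫ y : ℝ, (Real.exp (-(k * |x - y|)) / (2 * k)) * u y)
      = ((fun z : ℝ => Real.exp (-(k * |z|)) / (2 * k)) ⋆[ContinuousLinearMap.mul ℝ ℝ] u) x := by
  rw [convolution_def]
  have := integral_sub_left_eq_self
    (fun t : ℝ => (Real.exp (-(k * |t|)) / (2 * k)) * u (x - t)) volume x
  simp only [sub_sub_cancel] at this
  rw [this]
  simp [ContinuousLinearMap.mul_apply']

lemma upper_bound {k : ℝ} (hk : 0 < k) (u : ℝ → ℝ) (hcu : Continuous u)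
    (hsupp : HasCompactSupport u) :
    (∫ x : ℝ, u x * ∫ y : ℝ, (Real.exp (-(k * |x - y|)) / (2 * k)) * u y)
      ≤ (∫ x : ℝ, u x ^ 2) / k ^ 2 := by
  set G : ℝ → ℝ := fun z => Real.exp (-(k * |z|)) / (2 * k) with hGdef
  set L := ContinuousLinearMap.mul ℝ ℝ
  have hGnn : ∀ z, 0 ≤ G z := fun z =>
    div_nonneg (Real.exp_nonneg _) (by positivity)
  have hGint : Integrable G := G_int hk
  have hGc : Continuous G := G_cont
  set u2 : ℝ → ℝ := fun x => u x ^ 2 with hu2def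
  have hu2c : Continuous u2 := hcu.pow 2
  have hu2supp : HasCompactSupport u2 := hsupp.comp_left (g := (· ^ 2)) (by simp)
  have hu2int : Integrable u2 := hu2c.integrable_of_hasCompactSupport hu2supp
  have huint : Integrable u := hcu.integrable_of_hasCompactSupport hsupp
  have hwc : Continuous (G ⋆[L] u) :=
    HasCompactSupport.continuous_convolution_right L hsupp (hGint.locallyIntegrable) hcu
  have hconv2 : Integrable (G ⋆[L] u2) := hGint.integrable_convolution L hu2int
  have hconv2_int : ∫ x, (G ⋆[L] u2) x = (k^2)⁻¹ * ∫ x, u2 x := by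
    rw [integral_convolution L hGint hu2int, ← G_integral hk]
    simp [L, ContinuousLinearMap.mul_apply']
    exact Or.inl rfl
  -- pointwise bound
  have hpt : ∀ x, u x * (∫ y : ℝ, G (x - y) * u y)
      ≤ (1/2) * (u x ^ 2 * (k^2)⁻¹ + (G ⋆[L] u2) x) := by
    intro x
    have hLrw : u x * (∫ y : ℝ, G (x - y) * u y) = ∫ y : ℝ, u x * (G (x - y) * u y) :=
      (integral_const_mul _ _).symm
    have hGxint : Integrable (fun y : ℝ => G (x - y)) := by
      have : (fun y : ℝ => G (x - y)) = fun y : ℝ => G (x - y) := rfl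
      exact (hGint.comp_sub_left x)
    have hIl : Integrable (fun y : ℝ => u x * (G (x - y) * u y)) := by
      apply Integrable.const_mul
      apply Continuous.integrable_of_hasCompactSupport
      · exact (hGc.comp (continuous_const.sub continuous_id)).mul hcu
      · exact hsupp.mul_left
    have hIr : Integrable (fun y : ℝ => G (x - y) * ((u x ^ 2 + u y ^ 2) / 2)) := by
      have : (fun y : ℝ => G (x - y) * ((u x ^ 2 + u y ^ 2) / 2))
          = fun y : ℝ => (G (x - y) * (u x ^ 2 / 2)) + G (x - y) * u y ^ 2 / 2 := by
        funext y; ring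
      rw [this]
      apply Integrable.add
      · exact hGxint.mul_const _
      · apply Integrable.div_const
        apply Continuous.integrable_of_hasCompactSupport
        · exact (hGc.comp (continuous_const.sub continuous_id)).mul hu2c
        · exact hu2supp.mul_left
    rw [hLrw]
    calc ∫ y : ℝ, u x * (G (x - y) * u y)
        ≤ ∫ y : ℝ, G (x - y) * ((u x ^ 2 + u y ^ 2) / 2) := by
          apply integral_mono hIl hIr
          intro y
          have h1 : u x * u y ≤ (u x ^ 2 + u y ^ 2) / 2 := by nlinarith [sq_nonneg (u x - u y)]
          have := mul_le_mul_of_nonneg_left h1 (hGnn (x - y))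
          calc u x * (G (x - y) * u y) = G (x - y) * (u x * u y) := by ring
            _ ≤ G (x - y) * ((u x ^ 2 + u y ^ 2) / 2) := this
      _ = (1/2) * (u x ^ 2 * (k^2)⁻¹ + (G ⋆[L] u2) x) := by
          have hsplit : ∫ y : ℝ, G (x - y) * ((u x ^ 2 + u y ^ 2) / 2)
              = (u x ^ 2 / 2) * (∫ y : ℝ, G (x - y)) + (1/2) * ∫ y : ℝ, G (x - y) * u y ^ 2 := by
            rw [← integral_const_mul, ← integral_const_mul, ← integral_add]
            · congr 1; funext y; ring
            · exact hGxint.const_mul _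
            · apply Integrable.const_mul
              apply Continuous.integrable_of_hasCompactSupport
              · exact (hGc.comp (continuous_const.sub continuous_id)).mul hu2c
              · exact hu2supp.mul_left
          rw [hsplit]
          have h2 : (∫ y : ℝ, G (x - y)) = (k^2)⁻¹ := by
            rw [integral_sub_left_eq_self G volume x]
            exact G_integral hk
          have h3 : (∫ y : ℝ, G (x - y) * u y ^ 2) = (G ⋆[L] u2) x := inner_eq_conv u2 x
          rw [h2, h3]; ring
  -- integrate
  have hIl : Integrable (fun x : ℝ => u x * (G ⋆[L] u) x) := by
    apply Continuous.integrable_of_hasCompactSupport (hcu.mul hwc)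
    exact hsupp.mul_right
  have hIr : Integrable (fun x : ℝ => (1/2) * (u x ^ 2 * (k^2)⁻¹ + (G ⋆[L] u2) x)) :=
    ((hu2int.mul_const _).add hconv2).const_mul _
  calc (∫ x : ℝ, u x * ∫ y : ℝ, (Real.exp (-(k * |x - y|)) / (2 * k)) * u y)
      = ∫ x : ℝ, u x * (G ⋆[L] u) x := by
        congr 1; funext x; rw [inner_eq_conv u x]
    _ ≤ ∫ x : ℝ, (1/2) * (u x ^ 2 * (k^2)⁻¹ + (G ⋆[L] u2) x) := by
        apply integral_mono hIl hIr
        intro x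
        have := hpt x
        calc u x * (G ⋆[L] u) x = u x * ∫ y : ℝ, G (x - y) * u y := by
              rw [show (∫ y : ℝ, G (x - y) * u y) = (G ⋆[L] u) x from inner_eq_conv u x]
          _ ≤ _ := hpt x
    _ = (∫ x : ℝ, u x ^ 2) / k ^ 2 := by
        rw [integral_const_mul, integral_add (hu2int.mul_const _) hconv2,
          integral_mul_const, hconv2_int]
        field_simp [hu2def]
        rw [show (∫ a, u2 a) = ∫ x, u x ^ 2 from rfl]
        ring

lemma D_pos {k : ℝ} (hk : 0 < k) (u : ℝ → ℝ) (hcu : Continuous u)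
    (hsupp : HasCompactSupport u) (hne : u ≠ 0) :
    0 < ∫ x : ℝ, u x * ∫ y : ℝ, (Real.exp (-(k * |x - y|)) / (2 * k)) * u y := by
  classical
  -- choose R with tsupport u ⊆ Ioo (-R) R
  obtain ⟨R₀, hR₀⟩ := (hsupp.isBounded).subset_closedBall 0
  set R : ℝ := |R₀| + 1 with hRdef
  have hRpos : 0 < R := by positivity
  have hu0 : ∀ x : ℝ, R ≤ |x| → u x = 0 := by
    intro x hx
    apply image_eq_zero_of_notMem_tsupport
    intro hmem
    have := hR₀ hmem
    simp only [Metric.mem_closedBall, Real.dist_eq, sub_zero] at this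
    have := le_abs_self R₀
    linarith
  have hu0' : ∀ x : ℝ, x ≤ -R → u x = 0 := fun x hx =>
    hu0 x (by rw [abs_of_nonpos (by linarith)]; linarith)
  have hu0'' : ∀ x : ℝ, R ≤ x → u x = 0 := fun x hx =>
    hu0 x (by rw [abs_of_nonneg (by linarith)]; exact hx)
  -- the two auxiliary primitives
  set f1 : ℝ → ℝ := fun y => Real.exp (k * y) * u y with hf1def
  set f2 : ℝ → ℝ := fun y => Real.exp (-(k * y)) * u y with hf2def
  have hf1c : Continuous f1 := (Real.continuous_exp.comp (continuous_const.mul continuous_id)).mul hcu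
  have hf2c : Continuous f2 :=
    (Real.continuous_exp.comp ((continuous_const.mul continuous_id).neg)).mul hcu
  have hf1int : Integrable f1 := hf1c.integrable_of_hasCompactSupport hsupp.mul_left
  have hf2int : Integrable f2 := hf2c.integrable_of_hasCompactSupport hsupp.mul_left
  set A : ℝ → ℝ := fun x => ∫ y in (-R)..x, f1 y with hAdef
  set B : ℝ → ℝ := fun x => ∫ y in x..R, f2 y with hBdef
  have hA : ∀ x, HasDerivAt A (f1 x) x := fun x => (hf1c.integral_hasStrictDerivAt (-R) x).hasDerivAt
  have hB : ∀ x, HasDerivAt B (-(f2 x)) x := by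
    intro x
    have h1 : ∀ z, B z = -(∫ y in R..z, f2 y) := fun z => (intervalIntegral.integral_symm _ _)
    have h2 : HasDerivAt (fun z => ∫ y in R..z, f2 y) (f2 x) x :=
      (hf2c.integral_hasStrictDerivAt R x).hasDerivAt
    have hBeq : B = fun z => -(∫ y in R..z, f2 y) := funext h1
    rw [hBeq]
    exact h2.neg
  have hAc : Continuous A := by
    apply continuous_iff_continuousAt.mpr
    exact fun x => (hA x).continuousAt
  have hBc : Continuous B := by
    apply continuous_iff_continuousAt.mpr
    exact fun x => (hB x).continuousAt
  -- identity for the inner integral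
  have inner_eq : ∀ x : ℝ,
      (∫ y : ℝ, (Real.exp (-(k * |x - y|)) / (2 * k)) * u y)
      = (1/(2*k)) * (Real.exp (-(k * x)) * A x + Real.exp (k * x) * B x) := by
    intro x
    have hGu_int : Integrable (fun y : ℝ => (Real.exp (-(k * |x - y|)) / (2 * k)) * u y) := by
      apply Continuous.integrable_of_hasCompactSupport
      · exact (((Real.continuous_exp.comp ((continuous_const.mul
          ((continuous_const.sub continuous_id).abs)).neg))).div_const _).mul hcu
      · exact hsupp.mul_left
    have hsplit := intervalIntegral.integral_Iic_add_Ioi (b := x)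
      hGu_int.integrableOn hGu_int.integrableOn
    -- left piece
    have hleft : (∫ y in Iic x, (Real.exp (-(k * |x - y|)) / (2 * k)) * u y)
        = (Real.exp (-(k * x)) / (2*k)) * A x := by
      have h1 : ∀ y ∈ Iic x, (Real.exp (-(k * |x - y|)) / (2 * k)) * u y
          = (Real.exp (-(k * x)) / (2*k)) * f1 y := by
        intro y hy
        simp only [mem_Iic] at hy
        rw [abs_of_nonneg (by linarith), hf1def]
        rw [show -(k * (x - y)) = -(k*x) + k*y by ring, Real.exp_add]
        ring
      rw [setIntegral_congr_fun measurableSet_Iic h1, integral_const_mul]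
      congr 1
      -- ∫_{Iic x} f1 = A x
      have hIic0 : (∫ y in Iic (-R), f1 y) = 0 := by
        apply setIntegral_eq_zero_of_forall_eq_zero
        intro y hy
        simp only [mem_Iic] at hy
        simp [hf1def, hu0' y hy]
      have := intervalIntegral.integral_Iic_sub_Iic hf1int.integrableOn hf1int.integrableOn
        (a := -R) (b := x)
      rw [hIic0, sub_zero] at this
      exact this.symm ▸ rfl
    -- right piece
    have hright : (∫ y in Ioi x, (Real.exp (-(k * |x - y|)) / (2 * k)) * u y)
        = (Real.exp (k * x) / (2*k)) * B x := by
      have h1 : ∀ y ∈ Ioi x, (Real.exp (-(k * |x - y|)) / (2 * k)) * u y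
          = (Real.exp (k * x) / (2*k)) * f2 y := by
        intro y hy
        simp only [mem_Ioi] at hy
        rw [abs_of_nonpos (by linarith), hf2def]
        rw [show -(k * -(x - y)) = k*x + -(k*y) by ring, Real.exp_add]
        ring
      rw [setIntegral_congr_fun measurableSet_Ioi h1, integral_const_mul]
      congr 1
      -- ∫_{Ioi x} f2 = B x
      have hIoi0 : (∫ y in Ioi R, f2 y) = 0 := by
        apply setIntegral_eq_zero_of_forall_eq_zero
        intro y hy
        simp only [mem_Ioi] at hy
        simp [hf2def, hu0'' y hy.le]
      have hsplit2 := intervalIntegral.integral_Iic_add_Ioi (b := R)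
        hf2int.integrableOn hf2int.integrableOn
      have hsplit3 := intervalIntegral.integral_Iic_add_Ioi (b := x)
        hf2int.integrableOn hf2int.integrableOn
      have hBx := intervalIntegral.integral_Iic_sub_Iic hf2int.integrableOn hf2int.integrableOn
        (a := x) (b := R)
      -- B x = ∫_{Iic R} - ∫_{Iic x} = (∫ - 0) - ∫_{Iic x} = ∫_{Ioi x}
      have : (∫ y in Ioi x, f2 y) = B x := by
        show _ = ∫ y in x..R, f2 y
        rw [← hBx]
        have e1 : (∫ y in Iic R, f2 y) = (∫ y : ℝ, f2 y) - (∫ y in Ioi R, f2 y) := by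
          rw [← hsplit2]; ring
        have e2 : (∫ y in Iic x, f2 y) = (∫ y : ℝ, f2 y) - (∫ y in Ioi x, f2 y) := by
          rw [← hsplit3]; ring
        rw [e1, e2, hIoi0]
        ring
      rw [this]
    rw [← hsplit, hleft, hright]
    ring
  -- reduce to the interval [-R, R]
  set p : ℝ → ℝ := fun x => Real.exp (-(k * x)) * u x * A x with hpdef
  set q : ℝ → ℝ := fun x => Real.exp (k * x) * u x * B x with hqdef
  have hpc : Continuous p :=
    ((Real.continuous_exp.comp (continuous_const.mul continuous_id).neg).mul hcu).mul hAc
  have hqc : Continuous q :=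
    ((Real.continuous_exp.comp (continuous_const.mul continuous_id)).mul hcu).mul hBc
  have hWsupp : Function.support
      (fun x => u x * ∫ y : ℝ, (Real.exp (-(k * |x - y|)) / (2 * k)) * u y) ⊆ Ioc (-R) R := by
    intro x hx
    have hux : u x ≠ 0 := by
      intro h0
      apply hx
      simp [h0]
    have : |x| < R := by
      by_contra hge
      exact hux (hu0 x (le_of_not_gt hge))
    cases' abs_lt.mp this with h1 h2
    exact ⟨h1, h2.le⟩
  have hD1 : (∫ x : ℝ, u x * ∫ y : ℝ, (Real.exp (-(k * |x - y|)) / (2 * k)) * u y)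
      = ∫ x in (-R)..R, (1/(2*k)) * (p x + q x) := by
    rw [← intervalIntegral.integral_eq_integral_of_support_subset hWsupp]
    apply intervalIntegral.integral_congr
    intro x _
    show u x * (∫ y : ℝ, (Real.exp (-(k * |x - y|)) / (2 * k)) * u y) = 1/(2*k) * (p x + q x)
    rw [inner_eq x]
    simp only [hpdef, hqdef]
    ring
  set IA : ℝ := ∫ x in (-R)..R, Real.exp (-(2*k*x)) * A x^2 with hIAdef
  set IB : ℝ := ∫ x in (-R)..R, Real.exp (2*k*x) * B x^2 with hIBdef
  have hIAc : Continuous (fun x => Real.exp (-(2*k*x)) * A x^2) :=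
    (Real.continuous_exp.comp (continuous_const.mul continuous_id).neg).mul (hAc.pow 2)
  have hIBc : Continuous (fun x => Real.exp (2*k*x) * B x^2) :=
    (Real.continuous_exp.comp (continuous_const.mul continuous_id)).mul (hBc.pow 2)
  -- FTC for p
  have hF1 : ∀ x, HasDerivAt (fun x => Real.exp (-(2*k*x)) * A x^2 / 2)
      (p x - k * (Real.exp (-(2*k*x)) * A x^2)) x := by
    intro x
    have hlin : HasDerivAt (fun x : ℝ => -(2*k*x)) (-(2*k)) x := by
      have := ((hasDerivAt_id x).const_mul (2*k)).neg
      simp only [mul_one] at this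
      exact this
    have hexp : HasDerivAt (fun x : ℝ => Real.exp (-(2*k*x)))
        (Real.exp (-(2*k*x)) * (-(2*k))) x := (Real.hasDerivAt_exp _).comp x hlin
    have hA2 : HasDerivAt (fun x => A x^2) (2 * A x * f1 x) x := by
      have := (hA x).pow 2
      simp at this
      exact this
    have := (hexp.mul hA2).div_const 2
    have key : Real.exp (-(2*k*x)) * Real.exp (k*x) = Real.exp (-(k*x)) := by
      rw [← Real.exp_add]; ring_nf
    have e : p x - k * (Real.exp (-(2*k*x)) * A x^2) = (Real.exp (-(2*k*x)) * (-(2*k)) * A x^2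
        + Real.exp (-(2*k*x)) * (2 * A x * f1 x)) / 2 := by
      simp only [hpdef, hf1def]
      linear_combination (-(u x * A x)) * key
    rw [e]
    exact this
  have hP : (∫ x in (-R)..R, p x) = Real.exp (-(2*k*R)) * A R^2 / 2 + k * IA := by
    have hftc := intervalIntegral.integral_eq_sub_of_hasDerivAt
      (f := fun x => Real.exp (-(2*k*x)) * A x^2 / 2)
      (fun x _ => hF1 x)
      (((hpc.sub (continuous_const.mul hIAc))).intervalIntegrable (-R) R)
    have hsub : (∫ x in (-R)..R, (p x - k * (Real.exp (-(2*k*x)) * A x^2)))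
        = (∫ x in (-R)..R, p x) - k * IA := by
      rw [intervalIntegral.integral_sub (hpc.intervalIntegrable _ _)
        ((hIAc.intervalIntegrable _ _).const_mul k),
        intervalIntegral.integral_const_mul]
    have hAneg : A (-R) = 0 := intervalIntegral.integral_same
    rw [hsub] at hftc
    simp only [hAneg, ne_eq, OfNat.ofNat_ne_zero, not_false_eq_true, zero_pow, mul_zero,
      zero_div, sub_zero] at hftc
    linarith [hftc]
  -- FTC for q
  have hF2 : ∀ x, HasDerivAt (fun x => Real.exp (2*k*x) * B x^2 / 2)
      (k * (Real.exp (2*k*x) * B x^2) - q x) x := by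
    intro x
    have hlin : HasDerivAt (fun x : ℝ => 2*k*x) (2*k) x := by
      simpa using (hasDerivAt_id x).const_mul (2*k)
    have hexp : HasDerivAt (fun x : ℝ => Real.exp (2*k*x))
        (Real.exp (2*k*x) * (2*k)) x := (Real.hasDerivAt_exp _).comp x hlin
    have hB2 : HasDerivAt (fun x => B x^2) (2 * B x * -(f2 x)) x := by
      have := (hB x).pow 2
      simp at this
      rw [mul_neg]
      exact this
    have := (hexp.mul hB2).div_const 2
    have key : Real.exp (2*k*x) * Real.exp (-(k*x)) = Real.exp (k*x) := by
      rw [← Real.exp_add]; ring_nf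
    have e : k * (Real.exp (2*k*x) * B x^2) - q x = (Real.exp (2*k*x) * (2*k) * B x^2
        + Real.exp (2*k*x) * (2 * B x * -(f2 x))) / 2 := by
      simp only [hqdef, hf2def]
      linear_combination (u x * B x) * key
    rw [e]
    exact this
  have hQ : (∫ x in (-R)..R, q x) = Real.exp (-(2*k*R)) * B (-R)^2 / 2 + k * IB := by
    have hftc := intervalIntegral.integral_eq_sub_of_hasDerivAt
      (f := fun x => Real.exp (2*k*x) * B x^2 / 2)
      (fun x _ => hF2 x)
      (((continuous_const.mul hIBc).sub hqc).intervalIntegrable (-R) R)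
    have hsub : (∫ x in (-R)..R, (k * (Real.exp (2*k*x) * B x^2) - q x))
        = k * IB - (∫ x in (-R)..R, q x) := by
      rw [intervalIntegral.integral_sub ((hIBc.intervalIntegrable _ _).const_mul k)
        (hqc.intervalIntegrable _ _), intervalIntegral.integral_const_mul]
    have hBR : B R = 0 := intervalIntegral.integral_same
    rw [hsub] at hftc
    simp only [hBR, ne_eq, OfNat.ofNat_ne_zero, not_false_eq_true, zero_pow, mul_zero, zero_div,
      zero_sub] at hftc
    rw [show Real.exp (-(2*k*R)) = Real.exp (2*k*(-R)) by ring_nf] at *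
    linarith [hftc]
  -- nonnegativity and strict positivity
  have hIB0 : 0 ≤ IB := by
    apply intervalIntegral.integral_nonneg (by linarith)
    intro x _
    positivity
  have hx1 : ∃ x₁, x₁ ∈ Ioo (-R) R ∧ A x₁ ≠ 0 := by
    by_contra hcon
    push_neg at hcon
    apply hne
    funext x
    by_cases hx : x ∈ Ioo (-R) R
    · have hmem : Ioo (-R) R ∈ nhds x := isOpen_Ioo.mem_nhds hx
      have hev : A =ᶠ[nhds x] (fun _ => (0:ℝ)) := by
        filter_upwards [hmem] with z hz
        exact hcon z hz
      have hd0 : deriv A x = 0 := by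
        rw [hev.deriv_eq]
        simp
      have hd1 : deriv A x = f1 x := (hA x).deriv
      have : f1 x = 0 := by rw [← hd1, hd0]
      have hexp0 : Real.exp (k*x) ≠ 0 := Real.exp_ne_zero _
      simp only [hf1def] at this
      rcases mul_eq_zero.mp this with h | h
      · exact absurd h hexp0
      · exact h
    · simp only [mem_Ioo, not_and_or, not_lt] at hx
      apply hu0
      rcases hx with h | h
      · rw [abs_of_nonpos (by linarith)]; linarith
      · rw [abs_of_nonneg (by linarith)]; exact h
  obtain ⟨x₁, hx₁mem, hx₁⟩ := hx1
  have hIApos : 0 < IA := by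
    rw [hIAdef]
    rw [intervalIntegral.integral_pos_iff_support_of_nonneg_ae]
    · refine ⟨by linarith, ?_⟩
      have hopen : IsOpen (Function.support (fun x => Real.exp (-(2*k*x)) * A x^2)) := by
        have : Function.support (fun x => Real.exp (-(2*k*x)) * A x^2)
            = (fun x => Real.exp (-(2*k*x)) * A x^2) ⁻¹' ({0}ᶜ) := by
          ext z; simp [Function.mem_support]
        rw [this]
        exact isOpen_compl_singleton.preimage hIAc
      have hsub2 : Function.support (fun x => Real.exp (-(2*k*x)) * A x^2) ∩ Ioo (-R) R
          ⊆ Function.support (fun x => Real.exp (-(2*k*x)) * A x^2) ∩ Ioc (-R) R :=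
        inter_subset_inter_right _ Ioo_subset_Ioc_self
      have hx₁sup : x₁ ∈ Function.support (fun x => Real.exp (-(2*k*x)) * A x^2) := by
        simp only [Function.mem_support]
        positivity
      calc (0:ENNReal) < volume (Function.support (fun x => Real.exp (-(2*k*x)) * A x^2)
            ∩ Ioo (-R) R) :=
            (hopen.inter isOpen_Ioo).measure_pos volume ⟨x₁, hx₁sup, hx₁mem⟩
        _ ≤ _ := measure_mono hsub2
    · filter_upwards with x
      positivity
    · exact hIAc.intervalIntegrable _ _
  -- final arithmetic
  rw [hD1, intervalIntegral.integral_const_mul,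
    intervalIntegral.integral_add (hpc.intervalIntegrable _ _) (hqc.intervalIntegrable _ _),
    hP, hQ]
  have h1 : (0:ℝ) < 1/(2*k) := by positivity
  have h2 : (0:ℝ) ≤ Real.exp (-(2*k*R)) * A R^2 / 2 := by positivity
  have h3 : (0:ℝ) ≤ Real.exp (-(2*k*R)) * B (-R)^2 / 2 := by positivity
  apply mul_pos h1
  nlinarith [mul_pos hk hIApos, mul_nonneg hk.le hIB0]

/-- For k > 0 and u ≠ 0 (smooth, compactly supported), the Rayleigh-type quotient
    ⟨u, H_k u⟩ / ⟨u, G_k * u⟩ ≥ k⁴, with G_k(x) = e^{-k|x|}/(2k) and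
    H_k = -∂ₓ² + k² + 1 + V, V(x) = -(3/2)/cosh(x/2)². -/
theorem stmt_7 (k : ℝ) (hk : 0 < k) (u : ℝ → ℝ)
    (hu : ContDiff ℝ (⊤ : ℕ∞) u) (hsupp : HasCompactSupport u) (hne : u ≠ 0) :
    (∫ x : ℝ, ((deriv u x) ^ 2
        + (k ^ 2 + 1 + (-(3 / 2) / (Real.cosh (x / 2)) ^ 2)) * (u x) ^ 2))
      / (∫ x : ℝ, u x * ∫ y : ℝ, (Real.exp (-(k * |x - y|)) / (2 * k)) * u y)
      ≥ k ^ 4 := by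
  have hcu : Continuous u := hu.continuous
  have hcu' : Continuous (deriv u) := hu.continuous_deriv (by simp)
  set D : ℝ := ∫ x : ℝ, u x * ∫ y : ℝ, (Real.exp (-(k * |x - y|)) / (2 * k)) * u y with hDdef
  set I2 : ℝ := ∫ x : ℝ, u x ^ 2 with hI2def
  have hD : 0 < D := D_pos hk u hcu hsupp hne
  have hUB : D ≤ I2 / k ^ 2 := upper_bound hk u hcu hsupp
  have hgs : 0 ≤ ∫ x : ℝ, ((deriv u x)^2 + (1 + (-(3/2)/(Real.cosh (x/2))^2)) * u x ^2) :=
    ground_state u hu hsupp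
  -- continuity of the potential part
  have hVc : Continuous (fun x : ℝ => (1 + (-(3/2)/(Real.cosh (x/2))^2))) := by
    apply continuous_const.add
    apply Continuous.div continuous_const
    · exact (Real.continuous_cosh.comp (continuous_id.div_const 2)).pow 2
    · exact fun x => pow_ne_zero _ (Real.cosh_pos _).ne'
  have hsq_supp : HasCompactSupport (fun x => u x ^ 2) :=
    hsupp.comp_left (g := (· ^ 2)) (by simp)
  have hI_gs : Integrable (fun x : ℝ => (deriv u x)^2 + (1 + (-(3/2)/(Real.cosh (x/2))^2)) * u x ^2) := by
    apply Continuous.integrable_of_hasCompactSupport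
    · exact (hcu'.pow 2).add (hVc.mul (hcu.pow 2))
    · exact (hsupp.deriv.comp_left (g := (· ^ 2)) (by simp)).add hsq_supp.mul_left
  have hI_u2 : Integrable (fun x : ℝ => u x ^ 2) :=
    (hcu.pow 2).integrable_of_hasCompactSupport hsq_supp
  have hNsplit : (∫ x : ℝ, ((deriv u x) ^ 2
        + (k ^ 2 + 1 + (-(3 / 2) / (Real.cosh (x / 2)) ^ 2)) * (u x) ^ 2))
      = (∫ x : ℝ, ((deriv u x)^2 + (1 + (-(3/2)/(Real.cosh (x/2))^2)) * u x ^2))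
        + k^2 * I2 := by
    rw [hI2def, ← integral_const_mul, ← integral_add hI_gs (hI_u2.const_mul _)]
    congr 1
    funext x
    ring
  have hN : k^2 * I2 ≤ (∫ x : ℝ, ((deriv u x) ^ 2
      + (k ^ 2 + 1 + (-(3 / 2) / (Real.cosh (x / 2)) ^ 2)) * (u x) ^ 2)) := by
    rw [hNsplit]
    linarith
  rw [ge_iff_le, le_div_iff₀ hD]
  have h1 : k ^ 4 * D ≤ k ^ 4 * (I2 / k ^ 2) :=
    mul_le_mul_of_nonneg_left hUB (by positivity)
  have h2 : k ^ 4 * (I2 / k ^ 2) = k ^ 2 * I2 := by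
    field_simp
  calc k ^ 4 * D ≤ k ^ 2 * I2 := by rw [← h2]; exact h1
    _ ≤ _ := hN
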